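/- For every nonempty I ⊆ {1,…,m}: I ∈ 𝒳 if and only if there exists some 1 ≤ i ≤ |I| such that h·p_{(i:I)} ≤ i·α. -/

import Mathlib

/-!
Both sides of the equivalence can be read through counts instead of ranks: for `c, α ≥ 0`,
`c · p_{(i:I)} ≤ i · α` holds for some rank `i` iff some threshold `v` satisfies
`c · v ≤ N_I(v) · α` with `N_I(v) = #{j ∈ I | p j ≤ v} ≥ 1`.

Among sets of a given size `k`, the top set `K_k` has the fewest p-values below any threshold, so
`K_k ∈ 𝒰` forces `J ∈ 𝒰` for every `J` with `|J| = k`. As `K_k ∈ 𝒰` for all `k > h`, a threshold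
for `I` with factor `h` passes the Simes test on every superset: on those of size `≤ h` directly,
on the larger ones through `K_{|J|}`. Conversely, if `I ∈ 𝒳` and `|I| < h`, pad `I` with a top set
to some `J` of size `h`; a threshold for `J` either already works for `I`, or lies above an added
element, hence above everything outside `J`, and is then a threshold for `K_h`, contradicting
`K_h ∉ 𝒰`.
-/

open Finset

attribute [local instance] Classical.propDecidable

/-- The `i`-th smallest (1-indexed) element of the multiset of p-values `{p_j : j ∈ I}`. -/
noncomputable def pOrd {m : ℕ} (p : Fin m → ℝ) (I : Finset (Fin m)) (i : ℕ) : ℝ :=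
  ((I.val.map p).sort (· ≤ ·)).getD (i - 1) 0

/-- The Simes local test rejects `H_I` (written `I ∈ 𝒰`) iff `I` is nonempty and
`|I|·p_{(i:I)} ≤ i·α` for at least one `1 ≤ i ≤ |I|`. -/
def SimesU {m : ℕ} (α : ℝ) (p : Fin m → ℝ) (I : Finset (Fin m)) : Prop :=
  ∃ i, 1 ≤ i ∧ i ≤ I.card ∧ (I.card : ℝ) * pOrd p I i ≤ (i : ℝ) * α

/-- Closed testing rejects `H_I` (written `I ∈ 𝒳`) iff `J ∈ 𝒰` for every `J ⊇ I`. -/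
def ClosedX {m : ℕ} (α : ℝ) (p : Fin m → ℝ) (I : Finset (Fin m)) : Prop :=
  ∀ J, I ⊆ J → SimesU α p J

/-- `K_i = {r_{m−i+1},…,r_m}`: the `i` indices with largest p-values. -/
def Kset {m : ℕ} (r : Fin m → Fin m) (i : ℕ) : Finset (Fin m) :=
  (Finset.univ.filter fun j : Fin m => m - i ≤ (j : ℕ)).image r

/-- `L_i = {r_1,…,r_i}`: the `i` indices with smallest p-values. -/
def Lset {m : ℕ} (r : Fin m → Fin m) (i : ℕ) : Finset (Fin m) :=
  (Finset.univ.filter fun j : Fin m => (j : ℕ) < i).image r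

/-- `h = max{0 ≤ i ≤ m : K_i ∉ 𝒰}`. -/
noncomputable def hval {m : ℕ} (α : ℝ) (p : Fin m → ℝ) (r : Fin m → Fin m) : ℕ :=
  sSup {i | i ≤ m ∧ ¬ SimesU α p (Kset r i)}

/-- `t(S) = max{|I| : I ⊆ S, I ∉ 𝒳}`. -/
noncomputable def tval {m : ℕ} (α : ℝ) (p : Fin m → ℝ) (S : Finset (Fin m)) : ℕ :=
  sSup {k | ∃ I, I ⊆ S ∧ ¬ ClosedX α p I ∧ I.card = k}

/-- `d(S) = |S| − t(S)`. -/
noncomputable def dval {m : ℕ} (α : ℝ) (p : Fin m → ℝ) (S : Finset (Fin m)) : ℕ :=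
  S.card - tval α p S

/-- `q_α(S) = t(S)/|S|` for nonempty `S`, and `0` for `S = ∅`. -/
noncomputable def qval {m : ℕ} (α : ℝ) (p : Fin m → ℝ) (S : Finset (Fin m)) : ℝ :=
  if S = ∅ then 0 else (tval α p S : ℝ) / S.card

/-- `z = 0` if `h = m`, else `z = min{m−h ≤ i ≤ m : h·p_{(i)} ≤ (i−m+h+1)·α}`. -/
noncomputable def zval {m : ℕ} (α : ℝ) (p : Fin m → ℝ) (r : Fin m → Fin m) : ℕ :=
  if hval α p r = m then 0 else
    sInf {i | m - hval α p r ≤ i ∧ i ≤ m ∧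
      (hval α p r : ℝ) * pOrd p Finset.univ i ≤ ((i : ℝ) - m + hval α p r + 1) * α}

/-- `b_q = max{1 ≤ i ≤ m : m·p_{(i)} ≤ i·q}` (with `b_q = 0` if no such `i`). -/
noncomputable def bval {m : ℕ} (q : ℝ) (p : Fin m → ℝ) : ℕ :=
  sSup {i | 1 ≤ i ∧ i ≤ m ∧ (m : ℝ) * pOrd p Finset.univ i ≤ (i : ℝ) * q}

theorem List.Pairwise.getElem_le_iff_lt_countP {α : Type*} [LinearOrder α] {l : List α}
    (hl : l.Pairwise (· ≤ ·)) (v : α) {k : ℕ} (hk : k < l.length) :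
    l[k] ≤ v ↔ k < l.countP (· ≤ v) := by
  induction l generalizing k with
  | nil => simp at hk
  | cons a t ih =>
    obtain ⟨ha, ht⟩ := List.pairwise_cons.mp hl
    by_cases hav : a ≤ v
    · cases k with
      | zero => simp [hav]
      | succ k => simpa [List.countP_cons, hav] using ih ht (by simpa using hk)
    · have hcount : t.countP (· ≤ v) = 0 :=
        List.countP_eq_zero.mpr fun b hb => by simpa using (lt_of_not_ge hav).trans_le (ha b hb)
      cases k with
      | zero => simp [hav, hcount]
      | succ k =>
        simpa [List.countP_cons, hav, hcount] using
          (lt_of_not_ge hav).trans_le (ha _ (List.getElem_mem _))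

section Counting

variable {m : ℕ} (p : Fin m → ℝ)

noncomputable def countLE (v : ℝ) (I : Finset (Fin m)) : ℕ :=
  #{j ∈ I | p j ≤ v}

lemma countLE_eq_countP_sort (v : ℝ) (I : Finset (Fin m)) :
    countLE p v I = ((I.val.map p).sort (· ≤ ·)).countP (· ≤ v) := by
  rw [← Multiset.coe_countP, Multiset.sort_eq, Multiset.countP_map]
  simp [countLE, Finset.card, Finset.filter]

lemma countLE_le_card (v : ℝ) (I : Finset (Fin m)) : countLE p v I ≤ #I :=
  card_filter_le _ _

lemma countLE_union_le (v : ℝ) (I J : Finset (Fin m)) :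
    countLE p v (I ∪ J) ≤ countLE p v I + countLE p v J := by
  rw [countLE, filter_union]; exact card_union_le _ _

lemma countLE_add_countLE_compl (v : ℝ) (I : Finset (Fin m)) :
    countLE p v I + countLE p v Iᶜ = countLE p v univ := by
  rw [countLE, countLE, countLE,
    ← card_union_of_disjoint (disjoint_filter_filter disjoint_compl_right), ← filter_union,
    union_compl]

variable {p}

lemma pOrd_le_iff {I : Finset (Fin m)} {i : ℕ} (hi : 1 ≤ i) (hiI : i ≤ #I) (v : ℝ) :
    pOrd p I i ≤ v ↔ i ≤ countLE p v I := by
  have hlen : i - 1 < ((I.val.map p).sort (· ≤ ·)).length := by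
    rw [Multiset.length_sort, Multiset.card_map]; exact lt_of_lt_of_le (by omega) hiI
  rw [pOrd, List.getD_eq_getElem _ 0 hlen,
    (Multiset.pairwise_sort _ _).getElem_le_iff_lt_countP v hlen, countLE_eq_countP_sort]
  omega

lemma countLE_mono {v : ℝ} {I J : Finset (Fin m)} (h : I ⊆ J) : countLE p v I ≤ countLE p v J :=
  card_le_card (filter_subset_filter _ h)

lemma countLE_eq_zero {v : ℝ} {I : Finset (Fin m)} (h : ∀ j ∈ I, v < p j) : countLE p v I = 0 :=
  card_eq_zero.mpr (filter_eq_empty_iff.mpr fun j hj => not_le.mpr (h j hj))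

lemma countLE_le_of_forall_notMem_le {v : ℝ} {I J : Finset (Fin m)} (hI : ∀ j ∉ I, p j ≤ v)
    (hcard : #J = #I) : countLE p v I ≤ countLE p v J := by
  have hIc : countLE p v Iᶜ = #Iᶜ := by
    rw [countLE, filter_true_of_mem fun j hj => hI j (mem_compl.mp hj)]
  have hJc := countLE_le_card p v Jᶜ
  have := countLE_add_countLE_compl p v I
  have := countLE_add_countLE_compl p v J
  rw [card_compl] at hIc hJc
  omega

end Counting

section Threshold

variable {m : ℕ} {p : Fin m → ℝ} {α c : ℝ} {I : Finset (Fin m)}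

def IsSimesThreshold (c α : ℝ) (p : Fin m → ℝ) (I : Finset (Fin m)) (v : ℝ) : Prop :=
  1 ≤ countLE p v I ∧ c * v ≤ countLE p v I * α

lemma exists_pOrd_iff_exists_isSimesThreshold (hc : 0 ≤ c) (hα : 0 ≤ α) :
    (∃ i, 1 ≤ i ∧ i ≤ #I ∧ c * pOrd p I i ≤ i * α) ↔ ∃ v, IsSimesThreshold c α p I v := by
  constructor
  · rintro ⟨i, hi, hiI, hle⟩
    have hcount : i ≤ countLE p (pOrd p I i) I := (pOrd_le_iff hi hiI _).mp le_rfl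
    refine ⟨pOrd p I i, hi.trans hcount, hle.trans ?_⟩
    exact mul_le_mul_of_nonneg_right (by exact_mod_cast hcount) hα
  · rintro ⟨v, hv, hle⟩
    have hord : pOrd p I (countLE p v I) ≤ v :=
      (pOrd_le_iff hv (countLE_le_card p v I) v).mpr le_rfl
    exact ⟨_, hv, countLE_le_card p v I, (mul_le_mul_of_nonneg_left hord hc).trans hle⟩

lemma simesU_iff (hα : 0 ≤ α) : SimesU α p I ↔ ∃ v, IsSimesThreshold #I α p I v :=
  exists_pOrd_iff_exists_isSimesThreshold (Nat.cast_nonneg _) hα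

lemma IsSimesThreshold.mono {c' v : ℝ} {J : Finset (Fin m)} (h : IsSimesThreshold c α p I v)
    (hc' : 0 ≤ c') (hcc' : c' ≤ c) (hα : 0 ≤ α) (hIJ : countLE p v I ≤ countLE p v J) :
    IsSimesThreshold c' α p J v := by
  refine ⟨h.1.trans hIJ, ?_⟩
  have hcount : (countLE p v I : ℝ) * α ≤ countLE p v J * α :=
    mul_le_mul_of_nonneg_right (by exact_mod_cast hIJ) hα
  rcases le_total 0 v with hv | hv
  · exact (mul_le_mul_of_nonneg_right hcc' hv).trans (h.2.trans hcount)
  · exact (mul_nonpos_of_nonneg_of_nonpos hc' hv).trans (by positivity)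

end Threshold

theorem Nat.exists_eq_of_map_succ_le_add_one {f : ℕ → ℕ} (hf : ∀ n, f (n + 1) ≤ f n + 1)
    {a N : ℕ} (h0 : f 0 ≤ a) (hN : a ≤ f N) : ∃ n, f n = a := by
  induction N with
  | zero => exact ⟨0, le_antisymm h0 hN⟩
  | succ N ih =>
    by_cases ha : a ≤ f N
    · exact ih ha
    · exact ⟨N + 1, by have := hf N; omega⟩

section TopSets

variable {m : ℕ} {r : Fin m → Fin m}

lemma mem_Kset {k : ℕ} {j : Fin m} : j ∈ Kset r k ↔ ∃ u : Fin m, m - k ≤ (u : ℕ) ∧ r u = j := by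
  simp [Kset]

lemma card_Kset (hr : Function.Injective r) (k : ℕ) : #(Kset r k) = min k m := by
  rw [Kset, card_image_of_injective _ hr]
  have hlt : #{j : Fin m | (j : ℕ) < m - k} = min m (m - k) := Fin.card_filter_val_lt
  have hsplit := card_filter_add_card_filter_not (s := univ) fun j : Fin m => (j : ℕ) < m - k
  simp only [not_lt, card_univ, Fintype.card_fin] at hsplit
  omega

lemma card_Kset_of_le (hr : Function.Injective r) {k : ℕ} (hk : k ≤ m) : #(Kset r k) = k := by
  rw [card_Kset hr, min_eq_left hk]

lemma Kset_zero : Kset r 0 = ∅ := by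
  simp [Kset]

lemma Kset_mono : Monotone (Kset r) := fun k l hkl j hj => by
  obtain ⟨u, hu, rfl⟩ := mem_Kset.mp hj
  exact mem_Kset.mpr ⟨u, by omega, rfl⟩

lemma Kset_of_le (hr : Function.Surjective r) {k : ℕ} (hk : m ≤ k) : Kset r k = univ := by
  simp [Kset, Nat.sub_eq_zero_of_le hk, image_univ_of_surjective hr]

lemma card_union_Kset_succ_le (hr : Function.Injective r) (I : Finset (Fin m)) (k : ℕ) :
    #(I ∪ Kset r (k + 1)) ≤ #(I ∪ Kset r k) + 1 := by
  have hsub : Kset r k ⊆ Kset r (k + 1) := Kset_mono k.le_succ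
  have hdiff : #(Kset r (k + 1) \ Kset r k) ≤ 1 := by
    rw [card_sdiff_of_subset hsub, card_Kset hr, card_Kset hr]; omega
  calc #(I ∪ Kset r (k + 1)) ≤ #((I ∪ Kset r k) ∪ (Kset r (k + 1) \ Kset r k)) := by
        refine card_le_card fun j hj => ?_
        simp only [mem_union, mem_sdiff] at hj ⊢
        tauto
    _ ≤ #(I ∪ Kset r k) + 1 := (card_union_le _ _).trans (by omega)

lemma exists_card_union_Kset_eq (hr : Function.Bijective r) {I : Finset (Fin m)} {n : ℕ}
    (hI : #I ≤ n) (hn : n ≤ m) : ∃ k, #(I ∪ Kset r k) = n := by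
  refine Nat.exists_eq_of_map_succ_le_add_one (card_union_Kset_succ_le hr.1 I) (N := m) ?_ ?_
  · rwa [Kset_zero, union_empty]
  · rwa [Kset_of_le hr.2 le_rfl, union_eq_right.mpr (subset_univ I), card_univ, Fintype.card_fin]

variable {p : Fin m → ℝ}

lemma le_of_notMem_Kset (hr : Function.Surjective r) (hmono : Monotone fun u => p (r u))
    {k : ℕ} {j w : Fin m} (hj : j ∉ Kset r k) (hw : w ∈ Kset r k) : p j ≤ p w := by
  obtain ⟨u, rfl⟩ := hr j
  obtain ⟨u', hu', rfl⟩ := mem_Kset.mp hw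
  exact hmono (Fin.le_def.mpr (by by_contra! hlt; exact hj (mem_Kset.mpr ⟨u, by omega, rfl⟩)))

lemma countLE_Kset_card_le (hr : Function.Bijective r) (hmono : Monotone fun u => p (r u))
    (v : ℝ) (J : Finset (Fin m)) : countLE p v (Kset r #J) ≤ countLE p v J := by
  by_cases h : ∃ w ∈ Kset r #J, p w ≤ v
  · obtain ⟨w, hw, hwv⟩ := h
    refine countLE_le_of_forall_notMem_le
      (fun j hj => (le_of_notMem_Kset hr.2 hmono hj hw).trans hwv) ?_
    exact (card_Kset_of_le hr.1 (by simpa using card_le_univ J)).symm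
  · push Not at h
    rw [countLE_eq_zero h]
    exact Nat.zero_le _

lemma countLE_union_Kset_le (hr : Function.Bijective r) (hmono : Monotone fun u => p (r u))
    (v : ℝ) (I : Finset (Fin m)) (k : ℕ) :
    countLE p v (I ∪ Kset r k) ≤ countLE p v I ∨
      countLE p v (I ∪ Kset r k) ≤ countLE p v (Kset r #(I ∪ Kset r k)) := by
  by_cases h : ∃ w ∈ Kset r k, p w ≤ v
  · obtain ⟨w, hw, hwv⟩ := h
    refine .inr (countLE_le_of_forall_notMem_le (fun j hj => ?_) ?_)
    · exact (le_of_notMem_Kset hr.2 hmono (fun hjK => hj (mem_union_right I hjK)) hw).trans hwv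
    · exact card_Kset_of_le hr.1 (by simpa using card_le_univ (I ∪ Kset r k))
  · push Not at h
    refine .inl ((countLE_union_le p v I _).trans ?_)
    rw [countLE_eq_zero h, add_zero]

end TopSets

section ClosedTesting

variable {m : ℕ} {α : ℝ} {p : Fin m → ℝ} {r : Fin m → Fin m}

lemma not_simesU_empty : ¬ SimesU α p (∅ : Finset (Fin m)) := by
  rintro ⟨i, hi, hi0, -⟩
  simp only [card_empty] at hi0
  omega

lemma hval_mem : hval α p r ∈ {i | i ≤ m ∧ ¬ SimesU α p (Kset r i)} :=
  Nat.sSup_mem ⟨0, Nat.zero_le m, Kset_zero (r := r) ▸ not_simesU_empty⟩ ⟨m, fun _ hi => hi.1⟩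

lemma hval_le : hval α p r ≤ m :=
  hval_mem.1

lemma not_simesU_Kset_hval : ¬ SimesU α p (Kset r (hval α p r)) :=
  hval_mem.2

lemma simesU_Kset_of_hval_lt {k : ℕ} (hk : hval α p r < k) (hkm : k ≤ m) :
    SimesU α p (Kset r k) := by
  by_contra hK
  have hbdd : BddAbove {i | i ≤ m ∧ ¬ SimesU α p (Kset r i)} := ⟨m, fun _ hi => hi.1⟩
  exact absurd (le_csSup hbdd ⟨hkm, hK⟩) (not_le.mpr hk)

lemma exists_isSimesThreshold_hval_of_closedX (hα : 0 ≤ α) (hr : Function.Bijective r)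
    (hmono : Monotone fun u => p (r u)) {I : Finset (Fin m)} (hI : ClosedX α p I) :
    ∃ v, IsSimesThreshold (hval α p r) α p I v := by
  rcases le_or_gt (hval α p r) #I with hle | hlt
  · obtain ⟨v, hv⟩ := (simesU_iff hα).mp (hI I subset_rfl)
    exact ⟨v, hv.mono (Nat.cast_nonneg _) (by exact_mod_cast hle) hα le_rfl⟩
  obtain ⟨k, hk⟩ := exists_card_union_Kset_eq hr hlt.le hval_le
  obtain ⟨v, hv⟩ := (simesU_iff hα).mp (hI _ subset_union_left)
  rw [hk] at hv
  rcases countLE_union_Kset_le hr hmono v I k with hJI | hJK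
  · exact ⟨v, hv.mono (Nat.cast_nonneg _) le_rfl hα hJI⟩
  refine (not_simesU_Kset_hval (p := p) (r := r) ((simesU_iff hα).mpr ⟨v, ?_⟩)).elim
  rw [hk] at hJK
  rw [card_Kset_of_le hr.1 hval_le]
  exact hv.mono (Nat.cast_nonneg _) le_rfl hα hJK

lemma closedX_of_isSimesThreshold_hval (hα : 0 ≤ α) (hr : Function.Bijective r)
    (hmono : Monotone fun u => p (r u)) {I : Finset (Fin m)} {v : ℝ}
    (hv : IsSimesThreshold (hval α p r) α p I v) : ClosedX α p I := by
  intro J hIJ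
  rw [simesU_iff hα]
  rcases le_or_gt #J (hval α p r) with hle | hlt
  · exact ⟨v, hv.mono (Nat.cast_nonneg _) (by exact_mod_cast hle) hα (countLE_mono hIJ)⟩
  have hJm : #J ≤ m := by simpa using card_le_univ J
  obtain ⟨w, hw⟩ := (simesU_iff hα).mp (simesU_Kset_of_hval_lt hlt hJm)
  rw [card_Kset_of_le hr.1 hJm] at hw
  exact ⟨w, hw.mono (Nat.cast_nonneg _) le_rfl hα (countLE_Kset_card_le hr hmono w J)⟩

end ClosedTesting

theorem stmt3_general
    (m : ℕ) (α : ℝ) (hα : 0 ≤ α ∧ α ≤ 1)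
    (p : Fin m → ℝ)
    (r : Fin m → Fin m) (hr : Function.Bijective r)
    (hmono : ∀ i j : Fin m, i ≤ j → p (r i) ≤ p (r j))
    (I : Finset (Fin m)) :
    ClosedX α p I ↔
      ∃ i, 1 ≤ i ∧ i ≤ I.card ∧ (hval α p r : ℝ) * pOrd p I i ≤ (i : ℝ) * α := by
  have hmono' : Monotone fun u => p (r u) := fun i j hij => hmono i j hij
  rw [exists_pOrd_iff_exists_isSimesThreshold (Nat.cast_nonneg _) hα.1]
  exact ⟨exists_isSimesThreshold_hval_of_closedX hα.1 hr hmono',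
    fun ⟨_, hv⟩ => closedX_of_isSimesThreshold_hval hα.1 hr hmono' hv⟩

theorem stmt3
    (m : ℕ) (hm : 1 ≤ m) (α : ℝ) (hα : 0 ≤ α ∧ α ≤ 1)
    (p : Fin m → ℝ) (hp : ∀ i, 0 ≤ p i ∧ p i ≤ 1)
    (r : Fin m → Fin m) (hr : Function.Bijective r)
    (hmono : ∀ i j : Fin m, i ≤ j → p (r i) ≤ p (r j))
    (I : Finset (Fin m)) (hI : I.Nonempty) :
    ClosedX α p I ↔
      ∃ i, 1 ≤ i ∧ i ≤ I.card ∧ (hval α p r : ℝ) * pOrd p I i ≤ (i : ℝ) * α :=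
  stmt3_general m α hα p r hr hmono I
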